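/- arXiv:1205.3900 — 2 statements merged into one kernel-verified Lean document; each statement's English description precedes it below -/
import Mathlib

section
/- Let α > 0, β ∈ (0,1), and let q̄ ∈ [0,1) satisfy the replica symmetric fixed-point equation q̄ = ∫ tanh²( z √(αβ p̄) ) dμ(z), where p̄ = β q̄ / (1 − β(1−q̄))². Set β₁ = √α β / (1 − β(1−q̄)) and β₂ = 1 − β(1−q̄), and define: A_NN^RS = ln 2 + ∫ ln cosh( z √(αβ p̄) ) dμ(z) + (α/2) ln( 1/(1 − β(1−q̄)) ) + (αβ/2) q̄/(1 − β(1−q̄)) − (αβ/2) p̄ (1−q̄); A_SK^RS(β₁) = ln 2 + ∫ ln cosh( β₁ √q̄ z ) dμ(z) + (β₁²/4)(1 − q̄)² with q̄_SK = q̄; and A_Gauss^RS(β₂,β) = (1/2) ln σ² + (1/2) β₂² p̄_G σ² + (1/4) β₂² p̄_G², where p̄_G = (β₂ − (1−β))/β₂² and σ² = 1/(1 − β + β₂² p̄_G). Then the replica symmetric pressure of the analogical neural network decomposes linearly: A_NN^RS = A_SK^RS(β₁) − β₁²/4 + α A_Gauss^RS(β₂,β). -/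
open MeasureTheory ProbabilityTheory Real

/-! The identity is purely algebraic once the two Gaussian integrals are matched: the Hopfield
integrand `log cosh (z √(αβp̄))` is the SK integrand at `β₁ √q̄`, since `αβp̄ = β₁² q̄`, and the
Gaussian spin glass sits at `σ² = 1/β₂` because `1 - β + β₂² p̄_G = β₂`. What remains is an
identity of rational functions of `β` and `q̄` with denominator `1 - β(1 - q̄)`. -/

lemma sqrt_mul_mul_div_sq {α β q D : ℝ} (hα : 0 ≤ α) (hβ : 0 ≤ β) (hD : 0 ≤ D) :
    √(α * β * (β * q / D ^ 2)) = √α * β / D * √q := by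
  have hsq : α * β * (β * q / D ^ 2) = (√α * β / D) ^ 2 * q := by
    rw [div_pow, mul_pow, sq_sqrt hα]
    ring
  rw [hsq, sqrt_mul (sq_nonneg _), sqrt_sq (by positivity)]

lemma one_sub_add_sq_mul_div_sq {β β₂ : ℝ} (h : β₂ ≠ 0) :
    1 - β + β₂ ^ 2 * ((β₂ - (1 - β)) / β₂ ^ 2) = β₂ := by
  field_simp
  ring

theorem hopfield_RS_decomposition_general (α β qbar : ℝ) (hα : 0 < α)
    (hβ : β ∈ Set.Ioo (0 : ℝ) 1) (hq0 : 0 ≤ qbar)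
    (pbar β₁ β₂ pG s ANN ASK AG : ℝ)
    (hpbar : pbar = β * qbar / (1 - β * (1 - qbar)) ^ 2)
    (hβ₁ : β₁ = Real.sqrt α * β / (1 - β * (1 - qbar)))
    (hβ₂ : β₂ = 1 - β * (1 - qbar))
    (hpG : pG = (β₂ - (1 - β)) / β₂ ^ 2)
    (hs : s = 1 / (1 - β + β₂ ^ 2 * pG))
    (hANN : ANN = Real.log 2
        + (∫ z, Real.log (Real.cosh (z * Real.sqrt (α * β * pbar))) ∂(gaussianReal 0 1))
        + (α / 2) * Real.log (1 / (1 - β * (1 - qbar)))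
        + (α * β / 2) * (qbar / (1 - β * (1 - qbar)))
        - (α * β / 2) * pbar * (1 - qbar))
    (hASK : ASK = Real.log 2
        + (∫ z, Real.log (Real.cosh (β₁ * Real.sqrt qbar * z)) ∂(gaussianReal 0 1))
        + (β₁ ^ 2 / 4) * (1 - qbar) ^ 2)
    (hAG : AG = (1 / 2) * Real.log s + (1 / 2) * β₂ ^ 2 * pG * s + (1 / 4) * β₂ ^ 2 * pG ^ 2) :
    ANN = ASK - β₁ ^ 2 / 4 + α * AG := by
  obtain ⟨hβ0, hβ1⟩ := hβ
  have hD : 0 < 1 - β * (1 - qbar) := by nlinarith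
  have hsqrt : √(α * β * pbar) = β₁ * √qbar := by
    rw [hpbar, hβ₁]
    exact sqrt_mul_mul_div_sq hα.le hβ0.le hD.le
  have hβ₁sq : β₁ ^ 2 = α * β ^ 2 / (1 - β * (1 - qbar)) ^ 2 := by
    rw [hβ₁, div_pow, mul_pow, sq_sqrt hα.le]
  have hs' : s = 1 / β₂ := by
    rw [hs, hpG, one_sub_add_sq_mul_div_sq (hβ₂ ▸ hD.ne')]
  have hpG' : pG = β * qbar / β₂ ^ 2 := by
    rw [hpG, hβ₂]
    ring_nf
  simp_rw [hANN, hASK, hAG, hsqrt, mul_comm _ (β₁ * √qbar), hβ₁sq, hs', hpG', hpbar, hβ₂]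
  field_simp
  ring

/-- The replica symmetric pressure of the analogical neural network decomposes linearly
into the SK replica symmetric pressure at noise `β₁` and (α times) the Gaussian
spin-glass replica symmetric pressure at noise `β₂`. -/
theorem hopfield_RS_decomposition (α β qbar : ℝ) (hα : 0 < α)
    (hβ : β ∈ Set.Ioo (0 : ℝ) 1) (hq0 : 0 ≤ qbar) (hq1 : qbar < 1)
    (pbar β₁ β₂ pG s ANN ASK AG : ℝ)
    (hpbar : pbar = β * qbar / (1 - β * (1 - qbar)) ^ 2)
    (hfix : qbar = ∫ z, (Real.tanh (z * Real.sqrt (α * β * pbar))) ^ 2 ∂(gaussianReal 0 1))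
    (hβ₁ : β₁ = Real.sqrt α * β / (1 - β * (1 - qbar)))
    (hβ₂ : β₂ = 1 - β * (1 - qbar))
    (hpG : pG = (β₂ - (1 - β)) / β₂ ^ 2)
    (hs : s = 1 / (1 - β + β₂ ^ 2 * pG))
    (hANN : ANN = Real.log 2
        + (∫ z, Real.log (Real.cosh (z * Real.sqrt (α * β * pbar))) ∂(gaussianReal 0 1))
        + (α / 2) * Real.log (1 / (1 - β * (1 - qbar)))
        + (α * β / 2) * (qbar / (1 - β * (1 - qbar)))
        - (α * β / 2) * pbar * (1 - qbar))
    (hASK : ASK = Real.log 2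
        + (∫ z, Real.log (Real.cosh (β₁ * Real.sqrt qbar * z)) ∂(gaussianReal 0 1))
        + (β₁ ^ 2 / 4) * (1 - qbar) ^ 2)
    (hAG : AG = (1 / 2) * Real.log s + (1 / 2) * β₂ ^ 2 * pG * s + (1 / 4) * β₂ ^ 2 * pG ^ 2) :
    ANN = ASK - β₁ ^ 2 / 4 + α * AG :=
  hopfield_RS_decomposition_general α β qbar hα hβ hq0 pbar β₁ β₂ pG s ANN ASK AG hpbar hβ₁ hβ₂ hpG
    hs hANN hASK hAG
end

section
/- Let α > 0 and β ≥ 0 with β(1+√α) < 1, set T = β√α and g₀ = (1−β)^{−2}. Suppose A, D, G : [0,T] → ℝ are differentiable and satisfy the system A' = 2AD, D' = AG + D², G' = 2GD on [0,T], with initial conditions A(0) = 1, D(0) = 0, G(0) = g₀. Then for all s ∈ [0,T] one has A(s) = 1/(1−g₀s²), D(s) = g₀ s/(1−g₀s²), G(s) = g₀/(1−g₀s²); in particular the rescaled overlap fluctuations of the analogical Hopfield model in the ergodic region are A(T) = ⟨ξ₁₂²⟩ = (1−β)²/((1−β)² − β²α), D(T) = ⟨ξ₁₂η₁₂⟩ =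 β√α/((1−β)² − β²α), and G(T) = ⟨η₁₂²⟩ = 1/((1−β)² − β²α), which diverge as β(1+√α) → 1, i.e. on the critical line β_c(α) = 1/(1+√α). -/
/-!
The closure system is an autonomous ODE `x' = v x` with a polynomial, hence locally Lipschitz,
vector field `v` on `ℝ³`, so two solutions on `[0, T]` with the same initial value coincide: both
stay in a compact set on which `v` is Lipschitz. The rational functions of the statement are such a
solution as long as `1 - g₀ s² > 0`, and `β (1 + √α) < 1` says exactly that `√g₀ T = β√α / (1 - β)`
is less than `1`. At `s = T` one has `1 - g₀ T² = ((1 - β)² - β²α) / (1 - β)²`.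
-/

open Real Set

theorem ODE_solution_unique_of_locallyLipschitz {E : Type*} [NormedAddCommGroup E]
    [NormedSpace ℝ E] {v : E → E} (hv : LocallyLipschitz v) {f g : ℝ → E} {a b : ℝ}
    (hf : ContinuousOn f (Icc a b)) (hf' : ∀ t ∈ Ico a b, HasDerivWithinAt f (v (f t)) (Ici t) t)
    (hg : ContinuousOn g (Icc a b)) (hg' : ∀ t ∈ Ico a b, HasDerivWithinAt g (v (g t)) (Ici t) t)
    (ha : f a = g a) : EqOn f g (Icc a b) := by
  set K := f '' Icc a b ∪ g '' Icc a b
  have hK : IsCompact K := (isCompact_Icc.image_of_continuousOn hf).union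
    (isCompact_Icc.image_of_continuousOn hg)
  obtain ⟨L, hL⟩ := hv.locallyLipschitzOn.exists_lipschitzOnWith_of_compact hK
  exact ODE_solution_unique_of_mem_Icc_right (v := fun _ => v) (s := fun _ => K)
    (fun _ _ => hL) hf hf' (fun t ht => Or.inl (mem_image_of_mem f (Ico_subset_Icc_self ht)))
    hg hg' (fun t ht => Or.inr (mem_image_of_mem g (Ico_subset_Icc_self ht))) ha

def gaussianClosureField (p : ℝ × ℝ × ℝ) : ℝ × ℝ × ℝ :=
  (2 * p.1 * p.2.1, p.1 * p.2.2 + p.2.1 ^ 2, 2 * p.2.2 * p.2.1)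

theorem contDiff_gaussianClosureField : ContDiff ℝ 1 gaussianClosureField := by
  unfold gaussianClosureField; fun_prop

noncomputable def gaussianClosureSolution (g₀ s : ℝ) : ℝ × ℝ × ℝ :=
  (1 / (1 - g₀ * s ^ 2), g₀ * s / (1 - g₀ * s ^ 2), g₀ / (1 - g₀ * s ^ 2))

theorem hasDerivAt_gaussianClosureSolution {g₀ s : ℝ} (hs : 1 - g₀ * s ^ 2 ≠ 0) :
    HasDerivAt (gaussianClosureSolution g₀)
      (gaussianClosureField (gaussianClosureSolution g₀ s)) s := by
  have hden : HasDerivAt (fun s => 1 - g₀ * s ^ 2) (-(g₀ * (2 * s))) s := by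
    simpa using ((hasDerivAt_pow 2 s).const_mul g₀).const_sub 1
  refine ((hasDerivAt_const s 1).div hden hs).prodMk
    ((((hasDerivAt_id s).const_mul g₀).div hden hs).prodMk
      ((hasDerivAt_const s g₀).div hden hs)) |>.congr_deriv ?_
  simp only [gaussianClosureSolution, gaussianClosureField, Prod.mk.injEq, id]
  refine ⟨?_, ?_, ?_⟩ <;> field_simp <;> ring

theorem one_sub_mul_sq_pos {g₀ s T : ℝ} (hg₀ : 0 ≤ g₀) (hs : s ∈ Icc 0 T) (hT : g₀ * T ^ 2 < 1) :
    0 < 1 - g₀ * s ^ 2 := by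
  have : s ^ 2 ≤ T ^ 2 := pow_le_pow_left₀ hs.1 hs.2 2
  nlinarith

theorem inv_sq_mul_sq_lt_one {c T : ℝ} (hT : 0 ≤ T) (hc : T < c) : c⁻¹ ^ 2 * T ^ 2 < 1 := by
  rw [← mul_pow, inv_mul_eq_div]
  have h0 : 0 ≤ T / c := div_nonneg hT (hT.trans hc.le)
  have h1 : T / c < 1 := (div_lt_one (hT.trans_lt hc)).2 hc
  nlinarith

theorem gaussianClosureSolution_critical {α β : ℝ} (hα : 0 ≤ α) (hβ : 1 - β ≠ 0)
    (hcrit : (1 - β) ^ 2 - β ^ 2 * α ≠ 0) :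
    gaussianClosureSolution ((1 - β)⁻¹ ^ 2) (β * √α) =
      ((1 - β) ^ 2 / ((1 - β) ^ 2 - β ^ 2 * α), β * √α / ((1 - β) ^ 2 - β ^ 2 * α),
        1 / ((1 - β) ^ 2 - β ^ 2 * α)) := by
  have hden : 1 - (1 - β)⁻¹ ^ 2 * (β * √α) ^ 2 = ((1 - β) ^ 2 - β ^ 2 * α) / (1 - β) ^ 2 := by
    rw [mul_pow, sq_sqrt hα]; field_simp
  simp only [gaussianClosureSolution, hden, Prod.mk.injEq]
  refine ⟨?_, ?_, ?_⟩ <;> field_simp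

/-- Solution of the Gaussian-closure differential system for the rescaled overlap
fluctuations of the analogical Hopfield model in the ergodic region, and the resulting
values `⟨ξ₁₂²⟩, ⟨ξ₁₂η₁₂⟩, ⟨η₁₂²⟩` at the endpoint `T = β√α`, which diverge on the
critical line `β_c(α) = 1/(1+√α)`. -/
theorem hopfield_fluctuation_system (α β : ℝ) (hα : 0 < α) (hβ0 : 0 ≤ β)
    (hβc : β * (1 + Real.sqrt α) < 1)
    (T g₀ : ℝ) (hT : T = β * Real.sqrt α) (hg₀ : g₀ = (1 - β)⁻¹ ^ 2)
    (A D G : ℝ → ℝ)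
    (hA : ∀ s ∈ Set.Icc (0 : ℝ) T, HasDerivWithinAt A (2 * A s * D s) (Set.Icc 0 T) s)
    (hD : ∀ s ∈ Set.Icc (0 : ℝ) T,
      HasDerivWithinAt D (A s * G s + (D s) ^ 2) (Set.Icc 0 T) s)
    (hG : ∀ s ∈ Set.Icc (0 : ℝ) T, HasDerivWithinAt G (2 * G s * D s) (Set.Icc 0 T) s)
    (hA0 : A 0 = 1) (hD0 : D 0 = 0) (hG0 : G 0 = g₀) :
    (∀ s ∈ Set.Icc (0 : ℝ) T,
        A s = 1 / (1 - g₀ * s ^ 2) ∧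
        D s = g₀ * s / (1 - g₀ * s ^ 2) ∧
        G s = g₀ / (1 - g₀ * s ^ 2)) ∧
      A T = (1 - β) ^ 2 / ((1 - β) ^ 2 - β ^ 2 * α) ∧
      D T = β * Real.sqrt α / ((1 - β) ^ 2 - β ^ 2 * α) ∧
      G T = 1 / ((1 - β) ^ 2 - β ^ 2 * α) := by
  have hT0 : 0 ≤ T := hT ▸ by positivity
  have hTβ : T < 1 - β := by rw [mul_one_add] at hβc; linarith
  have hsmall : g₀ * T ^ 2 < 1 := hg₀ ▸ inv_sq_mul_sq_lt_one hT0 hTβ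
  have hcrit : 0 < (1 - β) ^ 2 - β ^ 2 * α := by
    have : T ^ 2 = β ^ 2 * α := by rw [hT, mul_pow, sq_sqrt hα.le]
    nlinarith
  have hABG : ∀ s ∈ Icc 0 T, HasDerivWithinAt (fun s => (A s, D s, G s))
      (gaussianClosureField (A s, D s, G s)) (Icc 0 T) s :=
    fun s hs => (hA s hs).prodMk ((hD s hs).prodMk (hG s hs))
  have hsol : ∀ s ∈ Icc 0 T, HasDerivAt (gaussianClosureSolution g₀)
      (gaussianClosureField (gaussianClosureSolution g₀ s)) s := fun s hs =>
    hasDerivAt_gaussianClosureSolution (one_sub_mul_sq_pos (hg₀ ▸ by positivity) hs hsmall).ne'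
  have hEq : EqOn (fun s => (A s, D s, G s)) (gaussianClosureSolution g₀) (Icc 0 T) :=
    ODE_solution_unique_of_locallyLipschitz contDiff_gaussianClosureField.locallyLipschitz
      (fun s hs => (hABG s hs).continuousWithinAt)
      (fun s hs => (hABG s (Ico_subset_Icc_self hs)).mono_of_mem_nhdsWithin
        (Icc_mem_nhdsGE_of_mem hs))
      (fun s hs => (hsol s hs).continuousAt.continuousWithinAt)
      (fun s hs => (hsol s (Ico_subset_Icc_self hs)).hasDerivWithinAt)
      (by simp [gaussianClosureSolution, hA0, hD0, hG0])
  refine ⟨fun s hs => by simpa [gaussianClosureSolution] using hEq hs, ?_⟩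
  have hend : (A T, D T, G T) = gaussianClosureSolution g₀ T := hEq ⟨hT0, le_rfl⟩
  rw [hg₀, hT, gaussianClosureSolution_critical hα.le (by linarith : 0 < 1 - β).ne' hcrit.ne']
    at hend
  simpa [hT] using hend
end
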